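/- arXiv:1106.5198 — 6 statements merged into one kernel-verified Lean document; each statement's English description precedes it below -/
import Mathlib

section
/- Let S be an inverse semigroup, let H and K be closed inverse subsemigroups of S, and let s ∈ S. Then {s·h·inv(s) : h ∈ H} ⊆ K and {inv(s)·k·s : k ∈ K} ⊆ H hold simultaneously if and only if ({s·h·inv(s) : h ∈ H})↑ = K and ({inv(s)·k·s : k ∈ K})↑ = H. -/
namespace InvSgpPaper

/-- `inv` makes the semigroup `S` an inverse semigroup: `a * inv a * a = a`,
`inv a * a * inv a = inv a`, and all idempotents commute. -/
structure IsInvSgp (S : Type*) [Semigroup S] (inv : S → S) : Prop where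
  mul_inv_mul : ∀ a : S, a * inv a * a = a
  inv_mul_inv : ∀ a : S, inv a * a * inv a = inv a
  idem_comm : ∀ e f : S, e * e = e → f * f = f → e * f = f * e

section Defs

variable {S X Y : Type*} [Semigroup S]

/-- The natural partial order on an inverse semigroup:
`a ≤ b` iff `a = e * b` for some idempotent `e`. -/
def nle (a b : S) : Prop := ∃ e : S, e * e = e ∧ a = e * b

/-- The upward closure `A↑` of a subset `A`. -/
def up (A : Set S) : Set S := {s : S | ∃ a ∈ A, nle a s}

/-- A closed inverse subsemigroup: closed under multiplication, under `inv`,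
and upward closed (`H = H↑`). -/
def IsClosedInvSub (inv : S → S) (H : Set S) : Prop :=
  (∀ a ∈ H, ∀ b ∈ H, a * b ∈ H) ∧ (∀ a ∈ H, inv a ∈ H) ∧ up H = H

/-- The left coset `(sH)↑ = {x | s * h ≤ x for some h ∈ H}`. -/
def lcoset (s : S) (H : Set S) : Set S := {x : S | ∃ h ∈ H, nle (s * h) x}

/-- The set of idempotents of a subset `A`. -/
def idemSet (A : Set S) : Set S := {e ∈ A | e * e = e}

/-- A filter in `E(S)`: a nonempty set of idempotents closed under
multiplication and upward closed within `E(S)`. -/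
def IsFilterE (F : Set S) : Prop :=
  F.Nonempty ∧ (∀ e ∈ F, e * e = e) ∧ (∀ e ∈ F, ∀ f ∈ F, e * f ∈ F) ∧
    (∀ e ∈ F, ∀ f : S, f * f = f → nle e f → f ∈ F)

/-- `F̄ = {s ∈ S : ∀ f ∈ F, inv s * f * s ∈ F ∧ s * f * inv s ∈ F}`. -/
def fbar (inv : S → S) (F : Set S) : Set S :=
  {s : S | ∀ f ∈ F, inv s * f * s ∈ F ∧ s * f * inv s ∈ F}

/-- The minimum group congruence `σ`: `a σ b` iff some `c` satisfies `c ≤ a` and `c ≤ b`. -/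
def sigmaRel (a b : S) : Prop := ∃ c : S, nle c a ∧ nle c b

/-- The elementwise product of two subsets. -/
def setMul (A B : Set S) : Set S := {x : S | ∃ a ∈ A, ∃ b ∈ B, x = a * b}

/-- The elementwise inverse `A⁻¹` of a subset. -/
def setInv (inv : S → S) (A : Set S) : Set S := inv '' A

/-- An atlas: a subset `A` with `A·A⁻¹·A = A`. -/
def IsAtlas (inv : S → S) (A : Set S) : Prop := setMul (setMul A (setInv inv A)) A = A

/-- A (down-)directed subset: nonempty, and any two elements have a common
lower bound inside it. -/
def IsDirectedSet (A : Set S) : Prop :=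
  A.Nonempty ∧ ∀ a ∈ A, ∀ b ∈ A, ∃ c ∈ A, nle c a ∧ nle c b

/-- An action of `S` on `X` by partial maps, axioms (A1) and (A2). -/
def IsAction (act : S → X → Option X) : Prop :=
  (∀ e : S, e * e = e → ∀ x y : X, act e x = some y → y = x) ∧
    (∀ (s t : S) (x : X), act (s * t) x = (act t x).bind (act s))

/-- Transitivity of an action. -/
def IsTransitiveAct (act : S → X → Option X) : Prop :=
  ∀ x y : X, ∃ s : S, act s x = some y

/-- Effectiveness of an action: every point is in the domain of some element. -/
def IsEffectiveAct (act : S → X → Option X) : Prop :=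
  ∀ x : X, ∃ (s : S) (x' : X), act s x = some x'

/-- The stabilizer of a point. -/
def stab (act : S → X → Option X) (x : X) : Set S := {s : S | act s x = some x}

/-- A morphism of `S`-actions. -/
def IsMorphism (actX : S → X → Option X) (actY : S → Y → Option Y) (α : X → Y) : Prop :=
  ∀ (s : S) (x x' : X), actX s x = some x' → actY s (α x) = some (α x')

/-- A strong morphism of `S`-actions. -/
def IsStrongMorphism (actX : S → X → Option X) (actY : S → Y → Option Y)
    (α : X → Y) : Prop :=
  IsMorphism actX actY α ∧
    ∀ (s : S) (x : X) (y' : Y), actY s (α x) = some y' → ∃ x' : X, actX s x = some x'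

end Defs

/-! Conjugating back lands below the original element: for `k ∈ K`,
`s (s⁻¹ k s) s⁻¹ = e k e` with `e = s s⁻¹` idempotent, and `e k e ≤ k`. So if `s H s⁻¹ ⊆ K` and
`s⁻¹ K s ⊆ H`, every element of `K` lies above an element of `s H s⁻¹`, while `(s H s⁻¹)↑ ⊆ K↑ = K`.
The converse holds because every set is contained in its upward closure. -/

section Conjugation

variable {S : Type*} [Semigroup S] {inv : S → S}

namespace IsInvSgp

theorem isIdempotentElem_mul_inv (hS : IsInvSgp S inv) (a : S) :
    IsIdempotentElem (a * inv a) := by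
  calc a * inv a * (a * inv a) = a * inv a * a * inv a := by simp only [mul_assoc]
    _ = a * inv a := by rw [hS.mul_inv_mul]

theorem isIdempotentElem_inv_mul (hS : IsInvSgp S inv) (a : S) :
    IsIdempotentElem (inv a * a) := by
  calc inv a * a * (inv a * a) = inv a * a * inv a * a := by simp only [mul_assoc]
    _ = inv a * a := by rw [hS.inv_mul_inv]

theorem nle_refl (hS : IsInvSgp S inv) (a : S) : nle a a :=
  ⟨a * inv a, hS.isIdempotentElem_mul_inv a, (hS.mul_inv_mul a).symm⟩

theorem commute_of_isIdempotentElem (hS : IsInvSgp S inv) {e f : S}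
    (he : IsIdempotentElem e) (hf : IsIdempotentElem f) : Commute e f :=
  hS.idem_comm e f he hf

theorem mul_idem_eq_conj_mul (hS : IsInvSgp S inv) {e : S} (he : IsIdempotentElem e) (k : S) :
    k * e = k * e * inv k * k := by
  have hc := hS.commute_of_isIdempotentElem he (hS.isIdempotentElem_inv_mul k)
  calc k * e = k * inv k * k * e := by rw [hS.mul_inv_mul]
    _ = k * (inv k * k * e) := by simp only [mul_assoc]
    _ = k * (e * (inv k * k)) := by rw [hc.eq]
    _ = k * e * inv k * k := by simp only [mul_assoc]

theorem isIdempotentElem_conj (hS : IsInvSgp S inv) {e : S} (he : IsIdempotentElem e) (k : S) :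
    IsIdempotentElem (k * e * inv k) := by
  calc k * e * inv k * (k * e * inv k) = (k * e * inv k * k) * e * inv k := by
        simp only [mul_assoc]
    _ = k * e * e * inv k := by rw [← hS.mul_idem_eq_conj_mul he]
    _ = k * e * inv k := by rw [mul_assoc k e e, he.eq]

/-- `e k e = (e f) k` with `f = k e k⁻¹`, and `e f` is idempotent because idempotents commute. -/
theorem nle_idem_mul_mul_idem (hS : IsInvSgp S inv) {e : S} (he : IsIdempotentElem e) (k : S) :
    nle (e * k * e) k := by
  have hf := hS.isIdempotentElem_conj he k
  refine ⟨e * (k * e * inv k), he.mul_of_commute (hS.commute_of_isIdempotentElem he hf) hf, ?_⟩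
  rw [mul_assoc e (k * e * inv k) k, ← hS.mul_idem_eq_conj_mul he k, mul_assoc]

end IsInvSgp

theorem subset_up (hS : IsInvSgp S inv) (A : Set S) : A ⊆ up A :=
  fun a ha => ⟨a, ha, hS.nle_refl a⟩

theorem up_subset_of_subset {A K : Set S} (hK : up K = K) (hAK : A ⊆ K) : up A ⊆ K :=
  fun _ ⟨a, ha, hax⟩ => hK ▸ ⟨a, hAK ha, hax⟩

theorem up_conj_eq (hS : IsInvSgp S inv) {H K : Set S} (hK : up K = K) {s t : S}
    (hst : IsIdempotentElem (s * t)) (hHK : {x : S | ∃ h ∈ H, x = s * h * t} ⊆ K)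
    (hKH : {x : S | ∃ k ∈ K, x = t * k * s} ⊆ H) :
    up {x : S | ∃ h ∈ H, x = s * h * t} = K := by
  refine (up_subset_of_subset hK hHK).antisymm fun k hk => ?_
  refine ⟨s * (t * k * s) * t, ⟨_, hKH ⟨k, hk, rfl⟩, rfl⟩, ?_⟩
  have hconj : s * (t * k * s) * t = s * t * k * (s * t) := by simp only [mul_assoc]
  exact hconj ▸ hS.nle_idem_mul_mul_idem hst k

end Conjugation

/-- `H` and `K` are conjugate via `s` iff the upward closures of the
conjugated sets are exactly `K` and `H`. -/
theorem stmt2 {S : Type*} [Semigroup S] (inv : S → S) (hS : IsInvSgp S inv)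
    (H K : Set S) (hH : IsClosedInvSub inv H) (hK : IsClosedInvSub inv K) (s : S) :
    ({x : S | ∃ h ∈ H, x = s * h * inv s} ⊆ K ∧
      {x : S | ∃ k ∈ K, x = inv s * k * s} ⊆ H) ↔
    (up {x : S | ∃ h ∈ H, x = s * h * inv s} = K ∧
      up {x : S | ∃ k ∈ K, x = inv s * k * s} = H) := by
  constructor
  · rintro ⟨hHK, hKH⟩
    exact ⟨up_conj_eq hS hK.2.2 (hS.isIdempotentElem_mul_inv s) hHK hKH,
      up_conj_eq hS hH.2.2 (hS.isIdempotentElem_inv_mul s) hKH hHK⟩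
  · rintro ⟨hupK, hupH⟩
    exact ⟨hupK ▸ subset_up hS _, hupH ▸ subset_up hS _⟩

end InvSgpPaper
end

section
/- Let S be an inverse semigroup, let F be a filter in E(S), and let F̄ = {s ∈ S : for all f ∈ F, inv(s)·f·s ∈ F and s·f·inv(s) ∈ F}. If T is any closed inverse subsemigroup of S whose set of idempotents is F, then T ⊆ F̄. -/
namespace InvSgpPaper

section Conjugation

variable {S : Type*} [Semigroup S] {inv : S → S}

theorem isIdempotentElem_mul_of_mul_mul_eq {a b : S} (h : a * b * a = a) :
    IsIdempotentElem (a * b) := by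
  rw [IsIdempotentElem, ← mul_assoc, h]

/-- `f` commutes past the idempotent `x * y`, which `y` then absorbs. -/
theorem IsInvSgp.isIdempotentElem_mul_mul (hS : IsInvSgp S inv) {x y f : S}
    (hxy : IsIdempotentElem (x * y)) (hyxy : y * x * y = y) (hf : IsIdempotentElem f) :
    IsIdempotentElem (y * f * x) :=
  calc y * f * x * (y * f * x) = y * (f * (x * y)) * (f * x) := by simp only [mul_assoc]
    _ = y * (x * y * f) * (f * x) := by rw [hS.idem_comm f _ hf hxy]
    _ = y * x * y * (f * f) * x := by simp only [mul_assoc]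
    _ = y * f * x := by rw [hyxy, hf.eq]

theorem IsInvSgp.isIdempotentElem_inv_mul_mul (hS : IsInvSgp S inv) (a : S) {f : S}
    (hf : IsIdempotentElem f) : IsIdempotentElem (inv a * f * a) :=
  hS.isIdempotentElem_mul_mul (isIdempotentElem_mul_of_mul_mul_eq (hS.mul_inv_mul a))
    (hS.inv_mul_inv a) hf

theorem IsInvSgp.isIdempotentElem_mul_mul_inv (hS : IsInvSgp S inv) (a : S) {f : S}
    (hf : IsIdempotentElem f) : IsIdempotentElem (a * f * inv a) :=
  hS.isIdempotentElem_mul_mul (isIdempotentElem_mul_of_mul_mul_eq (hS.inv_mul_inv a))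
    (hS.mul_inv_mul a) hf

theorem IsInvSgp.conj_mem_idemSet (hS : IsInvSgp S inv) {T : Set S}
    (hmul : ∀ a ∈ T, ∀ b ∈ T, a * b ∈ T) (hinv : ∀ a ∈ T, inv a ∈ T) {t f : S} (ht : t ∈ T)
    (hf : f ∈ idemSet T) :
    inv t * f * t ∈ idemSet T ∧ t * f * inv t ∈ idemSet T :=
  ⟨⟨hmul _ (hmul _ (hinv t ht) _ hf.1) _ ht, hS.isIdempotentElem_inv_mul_mul t hf.2⟩,
    ⟨hmul _ (hmul _ ht _ hf.1) _ (hinv t ht), hS.isIdempotentElem_mul_mul_inv t hf.2⟩⟩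

end Conjugation

theorem stmt4_general {S : Type*} [Semigroup S] (inv : S → S) (hS : IsInvSgp S inv)
    (F : Set S) (T : Set S)
    (hT : IsClosedInvSub inv T) (hTE : idemSet T = F) :
    T ⊆ fbar inv F := by
  subst hTE
  exact fun t ht f hf => hS.conj_mem_idemSet hT.1 hT.2.1 ht hf

/-- Any closed inverse subsemigroup whose set of idempotents is the
filter `F` is contained in `F̄`. -/
theorem stmt4 {S : Type*} [Semigroup S] (inv : S → S) (hS : IsInvSgp S inv)
    (F : Set S) (hF : IsFilterE F) (T : Set S)
    (hT : IsClosedInvSub inv T) (hTE : idemSet T = F) :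
    T ⊆ fbar inv F :=
  stmt4_general inv hS F T hT hTE

end InvSgpPaper
end

section
/- Let S be an inverse semigroup acting transitively on sets X and Y, let x ∈ X and y ∈ Y, and let S_x and S_y be the stabilizers of x and y. Then there exists a morphism α : X → Y of S-actions with α(x) = y if and only if S_x ⊆ S_y; moreover any two morphisms from X to Y sending x to y are equal. -/
namespace InvSgpPaper

/-! Transport the base point along `X`: every `x'` is `t • x` for some `t`, and `α x'` is forced
to be `t • y`. This is defined because `inv t * t` stabilises `x`, hence `y`; it does not depend on
the choice of `t` because for two choices `s`, `t` the element `inv t * s` stabilises `x`, hence `y`. -/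

section Transport

variable {S X Y : Type*} [Semigroup S] {inv : S → S}

theorem IsInvSgp.inv_mul_self_idem (hS : IsInvSgp S inv) (s : S) :
    (inv s * s) * (inv s * s) = inv s * s := by
  rw [mul_assoc, ← mul_assoc s, hS.mul_inv_mul]

theorem IsInvSgp.mul_inv_self_idem (hS : IsInvSgp S inv) (s : S) :
    (s * inv s) * (s * inv s) = s * inv s := by
  rw [mul_assoc, ← mul_assoc (inv s), hS.inv_mul_inv]

variable {act : S → X → Option X}

theorem IsAction.mul_eq_some_iff (hX : IsAction act) {s t : S} {x z : X} :
    act (s * t) x = some z ↔ ∃ w, act t x = some w ∧ act s w = some z := by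
  rw [hX.2]
  exact Option.bind_eq_some_iff

theorem IsAction.inv_mul_self_mem_stab (hS : IsInvSgp S inv) (hX : IsAction act) {s : S}
    {x x' : X} (h : act s x = some x') : inv s * s ∈ stab act x := by
  have hs : act (s * (inv s * s)) x = some x' := by rwa [← mul_assoc, hS.mul_inv_mul]
  obtain ⟨w, hw, -⟩ := hX.mul_eq_some_iff.1 hs
  exact hX.1 _ (hS.inv_mul_self_idem s) x w hw ▸ hw

theorem IsAction.act_inv_of_act_eq_some (hS : IsInvSgp S inv) (hX : IsAction act) {s : S}
    {x x' : X} (h : act s x = some x') : act (inv s) x' = some x := by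
  obtain ⟨w, hw, hw'⟩ := hX.mul_eq_some_iff.1 (hX.inv_mul_self_mem_stab hS h)
  rwa [Option.some_inj.1 (hw.symm.trans h)] at hw'

variable {actX : S → X → Option X} {actY : S → Y → Option Y} {x : X} {y : Y}

theorem exists_act_eq_some_of_stab_subset (hS : IsInvSgp S inv) (hX : IsAction actX)
    (hY : IsAction actY) (hsub : stab actX x ⊆ stab actY y) {s : S} {x' : X}
    (h : actX s x = some x') : ∃ y', actY s y = some y' := by
  obtain ⟨y', hy', -⟩ := hY.mul_eq_some_iff.1 (hsub (hX.inv_mul_self_mem_stab hS h))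
  exact ⟨y', hy'⟩

theorem act_eq_of_stab_subset (hS : IsInvSgp S inv) (hX : IsAction actX) (hY : IsAction actY)
    (hsub : stab actX x ⊆ stab actY y) {s t : S} {x' : X} (hs : actX s x = some x')
    (ht : actX t x = some x') : actY s y = actY t y := by
  have hst : inv t * s ∈ stab actX x :=
    hX.mul_eq_some_iff.2 ⟨x', hs, hX.act_inv_of_act_eq_some hS ht⟩
  obtain ⟨y₁, hsy, hty₁⟩ := hY.mul_eq_some_iff.1 (hsub hst)
  obtain ⟨y₂, hty⟩ := exists_act_eq_some_of_stab_subset hS hX hY hsub ht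
  have : actY (t * inv t) y₁ = some y₂ := hY.mul_eq_some_iff.2 ⟨y, hty₁, hty⟩
  rw [hsy, hty, hY.1 _ (hS.mul_inv_self_idem t) y₁ y₂ this]

theorem exists_morphism_of_stab_subset (hS : IsInvSgp S inv) (hX : IsAction actX)
    (hY : IsAction actY) (hXt : IsTransitiveAct actX) (hsub : stab actX x ⊆ stab actY y) :
    ∃ α : X → Y, IsMorphism actX actY α ∧ α x = y := by
  choose t ht using hXt x
  choose α hα using fun x' => exists_act_eq_some_of_stab_subset hS hX hY hsub (ht x')
  refine ⟨α, fun s x₁ x₂ h => ?_, Option.some_inj.1 ((hα x).symm.trans (hsub (ht x)))⟩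
  have hst : actX (s * t x₁) x = some x₂ := hX.mul_eq_some_iff.2 ⟨x₁, ht x₁, h⟩
  rw [← hα x₂, ← act_eq_of_stab_subset hS hX hY hsub hst (ht x₂), hY.2, hα x₁, Option.bind_some]

end Transport

theorem stab_subset_of_isMorphism {S X Y : Type*} [Semigroup S] {actX : S → X → Option X}
    {actY : S → Y → Option Y} {α : X → Y} (hα : IsMorphism actX actY α) (x : X) :
    stab actX x ⊆ stab actY (α x) :=
  fun s hs => hα s x x hs

theorem IsMorphism.eq_of_apply_eq {S X Y : Type*} [Semigroup S] {actX : S → X → Option X}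
    {actY : S → Y → Option Y} (hXt : IsTransitiveAct actX) {α β : X → Y}
    (hα : IsMorphism actX actY α) (hβ : IsMorphism actX actY β) {x : X} (h : α x = β x) :
    α = β := by
  funext x'
  obtain ⟨s, hs⟩ := hXt x x'
  have hαs := hα s x x' hs
  rw [h, hβ s x x' hs] at hαs
  exact (Option.some_inj.1 hαs).symm

theorem stmt8_general {S X Y : Type*} [Semigroup S] (inv : S → S) (hS : IsInvSgp S inv)
    (actX : S → X → Option X) (actY : S → Y → Option Y)
    (hX : IsAction actX) (hY : IsAction actY)
    (hXt : IsTransitiveAct actX)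
    (x : X) (y : Y) :
    ((∃ α : X → Y, IsMorphism actX actY α ∧ α x = y) ↔ stab actX x ⊆ stab actY y) ∧
    (∀ α β : X → Y, IsMorphism actX actY α → IsMorphism actX actY β →
      α x = y → β x = y → α = β) := by
  refine ⟨⟨?_, exists_morphism_of_stab_subset hS hX hY hXt⟩, ?_⟩
  · rintro ⟨α, hα, rfl⟩
    exact stab_subset_of_isMorphism hα x
  · intro α β hα hβ hαx hβx
    exact hα.eq_of_apply_eq hXt hβ (hαx.trans hβx.symm)

/-- There is a (unique) morphism of transitive `S`-actions sending
`x` to `y` iff `S_x ⊆ S_y`. -/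
theorem stmt8 {S X Y : Type*} [Semigroup S] (inv : S → S) (hS : IsInvSgp S inv)
    (actX : S → X → Option X) (actY : S → Y → Option Y)
    (hX : IsAction actX) (hY : IsAction actY)
    (hXt : IsTransitiveAct actX) (hYt : IsTransitiveAct actY)
    (x : X) (y : Y) :
    ((∃ α : X → Y, IsMorphism actX actY α ∧ α x = y) ↔ stab actX x ⊆ stab actY y) ∧
    (∀ α β : X → Y, IsMorphism actX actY α → IsMorphism actX actY β →
      α x = y → β x = y → α = β) :=
  stmt8_general inv hS actX actY hX hY hXt x y

end InvSgpPaper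
end

section
/- Let S be an inverse semigroup acting transitively on sets X and Y. Then every strong morphism α : X → Y of S-actions is surjective. -/
namespace InvSgpPaper

theorem IsStrongMorphism.mem_range_of_act_eq_some {S X Y : Type*} [Semigroup S]
    {actX : S → X → Option X} {actY : S → Y → Option Y} {α : X → Y}
    (hα : IsStrongMorphism actX actY α) {s : S} {x : X} {y : Y}
    (hs : actY s (α x) = some y) : y ∈ Set.range α := by
  obtain ⟨x', hx'⟩ := hα.2 s x y hs
  refine ⟨x', Option.some.inj ?_⟩
  rw [← hα.1 s x x' hx', hs]

theorem stmt10_general {S X Y : Type*} [Semigroup S] [Nonempty X]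
    (actX : S → X → Option X) (actY : S → Y → Option Y)
    (hYt : IsTransitiveAct actY)
    (α : X → Y) (hα : IsStrongMorphism actX actY α) :
    Function.Surjective α := by
  intro y
  obtain ⟨x₀⟩ := ‹Nonempty X›
  obtain ⟨s, hs⟩ := hYt (α x₀) y
  exact hα.mem_range_of_act_eq_some hs

/-- A strong morphism between transitive (effective) `S`-actions
is surjective. -/
theorem stmt10 {S X Y : Type*} [Semigroup S] [Nonempty X]
    (inv : S → S) (hS : IsInvSgp S inv)
    (actX : S → X → Option X) (actY : S → Y → Option Y)
    (hX : IsAction actX) (hY : IsAction actY)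
    (hXe : IsEffectiveAct actX) (hYe : IsEffectiveAct actY)
    (hXt : IsTransitiveAct actX) (hYt : IsTransitiveAct actY)
    (α : X → Y) (hα : IsStrongMorphism actX actY α) :
    Function.Surjective α :=
  stmt10_general actX actY hYt α hα

end InvSgpPaper
end

section
/- Let S be an inverse semigroup acting transitively on sets X and Y, and suppose both actions are universal, i.e., for every point x the stabilizer S_x equals (E(S_x))↑, the upward closure in S of its own set of idempotents. Then every strong morphism α : X → Y of S-actions is a bijection. -/
namespace InvSgpPaper

section StrongMorphism

variable {S X Y : Type*} {actX : S → X → Option X} {actY : S → Y → Option Y} {α : X → Y}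

theorem IsStrongMorphism.surjective [Nonempty X] (hYt : IsTransitiveAct actY)
    (hα : IsStrongMorphism actX actY α) : Function.Surjective α := by
  intro y
  obtain ⟨x₀⟩ := ‹Nonempty X›
  obtain ⟨s, hs⟩ := hYt (α x₀) y
  obtain ⟨x', hx'⟩ := hα.2 s x₀ y hs
  refine ⟨x', Option.some_injective _ ?_⟩
  rw [← hα.1 s x₀ x' hx', hs]

variable [Semigroup S]

def IsUniversalAct (act : S → X → Option X) : Prop :=
  ∀ x : X, stab act x = up (idemSet (stab act x))

theorem IsStrongMorphism.act_eq_self_of_idem (hX : IsAction actX)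
    (hα : IsStrongMorphism actX actY α) {e : S} (he : e * e = e) {x : X}
    (hex : actY e (α x) = some (α x)) : actX e x = some x := by
  obtain ⟨x', hx'⟩ := hα.2 e x (α x) hex
  rwa [hX.1 e he x x' hx'] at hx'

/-- By universality `s ≥ f` for an idempotent `f = e * s` fixing `α x₁`; strongness makes `f` fix
`x₁`, so `x₁ = e · (s · x₁) = e · x₂`, and the idempotent `e` can only send `x₂` to itself. -/
theorem IsStrongMorphism.eq_of_act_of_map_eq (hX : IsAction actX) (hYu : IsUniversalAct actY)
    (hα : IsStrongMorphism actX actY α) {s : S} {x₁ x₂ : X} (hs : actX s x₁ = some x₂)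
    (hmap : α x₁ = α x₂) : x₁ = x₂ := by
  have hsY : s ∈ stab actY (α x₁) := (hα.1 s x₁ x₂ hs).trans (congrArg some hmap.symm)
  rw [hYu] at hsY
  obtain ⟨f, ⟨hf, hff⟩, e, he, rfl⟩ := hsY
  have hfx : actX (e * s) x₁ = some x₁ := hα.act_eq_self_of_idem hX hff hf
  rw [hX.2, hs] at hfx
  exact hX.1 e he x₂ x₁ hfx

theorem IsStrongMorphism.injective (hX : IsAction actX) (hXt : IsTransitiveAct actX)
    (hYu : IsUniversalAct actY) (hα : IsStrongMorphism actX actY α) :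
    Function.Injective α := fun x₁ x₂ hmap =>
  let ⟨_, hs⟩ := hXt x₁ x₂
  hα.eq_of_act_of_map_eq hX hYu hs hmap

end StrongMorphism

theorem stmt11_general {S X Y : Type*} [Semigroup S] [Nonempty X]
    (actX : S → X → Option X) (actY : S → Y → Option Y)
    (hX : IsAction actX)
    (hXt : IsTransitiveAct actX) (hYt : IsTransitiveAct actY)
    (hYu : ∀ y : Y, stab actY y = up (idemSet (stab actY y)))
    (α : X → Y) (hα : IsStrongMorphism actX actY α) :
    Function.Bijective α :=
  ⟨hα.injective hX hXt hYu, hα.surjective hYt⟩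

/-- A strong morphism between universal transitive `S`-actions is
a bijection. -/
theorem stmt11 {S X Y : Type*} [Semigroup S] [Nonempty X]
    (inv : S → S) (hS : IsInvSgp S inv)
    (actX : S → X → Option X) (actY : S → Y → Option Y)
    (hX : IsAction actX) (hY : IsAction actY)
    (hXt : IsTransitiveAct actX) (hYt : IsTransitiveAct actY)
    (hXu : ∀ x : X, stab actX x = up (idemSet (stab actX x)))
    (hYu : ∀ y : Y, stab actY y = up (idemSet (stab actY y)))
    (α : X → Y) (hα : IsStrongMorphism actX actY α) :
    Function.Bijective α :=
  stmt11_general actX actY hX hXt hYt hYu α hα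

end InvSgpPaper
end

section
/- Let k be a field and let V be a k-vector space of finite dimension n. Let M be a set of k-linear endomorphisms of V that is closed under composition, consists of idempotent endomorphisms, and whose elements pairwise commute (i.e., M is a semilattice in End_k(V)). Then M has at most 2^n elements. -/
/-!
A commuting idempotent `p` that is neither `0` nor `1` splits `V = range p ⊕ ker p` into two
proper subspaces invariant under the whole family. Each member is determined by its restrictions
to the two pieces, and these restrictions are again commuting idempotents, so induction on the
dimension bounds the family by `2 ^ dim (range p) * 2 ^ dim (ker p) = 2 ^ n`. If every member is
`0` or `1`, there are at most two of them, and only one when `V = 0`.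
-/

namespace InvSgpPaper

section

open Module Set

variable {k V : Type*} [DivisionRing k] [AddCommGroup V] [Module k V]

lemma isIdempotentElem_restrict {f : End k V} {U : Submodule k V} (hf : IsIdempotentElem f)
    (h : MapsTo f U U) : IsIdempotentElem (f.restrict h) :=
  LinearMap.ext fun x => Subtype.ext (LinearMap.congr_fun hf.eq x)

lemma range_ne_top_of_isIdempotentElem {p : End k V} (hp : IsIdempotentElem p) (h : p ≠ 1) :
    LinearMap.range p ≠ ⊤ := fun htop =>
  h (LinearMap.ext fun _ =>
    (LinearMap.IsIdempotentElem.mem_range_iff hp).mp (htop ▸ Submodule.mem_top))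

lemma encard_zero_one_le_two_pow_finrank [FiniteDimensional k V] :
    ({0, 1} : Set (End k V)).encard ≤ 2 ^ finrank k V := by
  rcases eq_or_ne (finrank k V) 0 with h | h
  · have : Subsingleton V := finrank_zero_iff.mp h
    simp [h, Subsingleton.elim (0 : End k V) 1]
  · have : Nontrivial V := nontrivial_of_finrank_pos (Nat.pos_of_ne_zero h)
    rw [encard_pair zero_ne_one]
    exact_mod_cast Nat.le_self_pow h 2

lemma encard_range_le_mul_of_isCompl {ι : Type*} {U W : Submodule k V} (hUW : IsCompl U W)
    (f : ι → End k V) (hU : ∀ i, MapsTo (f i) U U) (hW : ∀ i, MapsTo (f i) W W) :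
    (range f).encard ≤
      (range fun i => (f i).restrict (hU i)).encard *
        (range fun i => (f i).restrict (hW i)).encard := by
  have hsub : range f ⊆ (fun g : End k U × End k W =>
      LinearMap.ofIsCompl hUW (U.subtype ∘ₗ g.1) (W.subtype ∘ₗ g.2)) ''
      ((range fun i => (f i).restrict (hU i)) ×ˢ range fun i => (f i).restrict (hW i)) := by
    rintro _ ⟨i, rfl⟩
    exact ⟨((f i).restrict (hU i), (f i).restrict (hW i)), ⟨⟨i, rfl⟩, ⟨i, rfl⟩⟩,
      LinearMap.ofIsCompl_eq hUW (fun _ => rfl) (fun _ => rfl)⟩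
  exact (encard_le_encard hsub).trans ((encard_image_le _ _).trans encard_prod.le)

theorem encard_range_le_two_pow_finrank_of_commute [FiniteDimensional k V] {ι : Type*}
    (f : ι → End k V) (hidem : ∀ i, IsIdempotentElem (f i))
    (hcomm : ∀ i j, Commute (f i) (f j)) :
    (range f).encard ≤ 2 ^ finrank k V := by
  induction h : finrank k V using Nat.strong_induction_on generalizing V with
  | _ n ih =>
  by_cases htriv : ∀ i, f i = 0 ∨ f i = 1
  · exact h ▸ (encard_le_encard (range_subset_iff.2 htriv)).trans
      encard_zero_one_le_two_pow_finrank
  push Not at htriv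
  obtain ⟨i, hi0, hi1⟩ := htriv
  have hp := hidem i
  have hinv j := (LinearMap.IsIdempotentElem.commute_iff hp).mp (hcomm i j)
  have hproper {U : Submodule k V} (hU : U ≠ ⊤) (hinvU : ∀ j, MapsTo (f j) U U) :
      (range fun j => (f j).restrict (hinvU j)).encard ≤ 2 ^ finrank k U :=
    ih _ (h ▸ Submodule.finrank_lt hU) _ (fun j => isIdempotentElem_restrict (hidem j) _)
      (fun j j' => LinearMap.restrict_commute (hcomm j j') _ _) rfl
  calc (range f).encard
      ≤ _ := encard_range_le_mul_of_isCompl (LinearMap.IsIdempotentElem.isCompl hp) f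
          (fun j => (hinv j).1) (fun j => (hinv j).2)
    _ ≤ 2 ^ finrank k (LinearMap.range (f i)) * 2 ^ finrank k (LinearMap.ker (f i)) :=
        mul_le_mul' (hproper (range_ne_top_of_isIdempotentElem hp hi1) _)
          (hproper (mt LinearMap.ker_eq_top.mp hi0) _)
    _ = 2 ^ n := by rw [← pow_add, LinearMap.finrank_range_add_finrank_ker, h]

end

theorem stmt19_general {k V : Type*} [Field k] [AddCommGroup V] [Module k V]
    [FiniteDimensional k V] (n : ℕ) (hn : Module.finrank k V = n)
    (M : Set (Module.End k V))
    (hidem : ∀ f ∈ M, f * f = f)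
    (hcomm : ∀ f ∈ M, ∀ g ∈ M, f * g = g * f) :
    M.Finite ∧ M.ncard ≤ 2 ^ n := by
  have h := encard_range_le_two_pow_finrank_of_commute (Subtype.val : M → Module.End k V)
    (fun f => hidem f f.2) (fun f g => hcomm f f.2 g g.2)
  rw [Subtype.range_coe, hn] at h
  exact Set.encard_le_coe_iff_finite_ncard_le.mp (by exact_mod_cast h)

/-- A semilattice of idempotent, pairwise commuting linear
endomorphisms of an `n`-dimensional vector space has at most `2 ^ n` elements. -/
theorem stmt19 {k V : Type*} [Field k] [AddCommGroup V] [Module k V]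
    [FiniteDimensional k V] (n : ℕ) (hn : Module.finrank k V = n)
    (M : Set (Module.End k V))
    (hmul : ∀ f ∈ M, ∀ g ∈ M, f * g ∈ M)
    (hidem : ∀ f ∈ M, f * f = f)
    (hcomm : ∀ f ∈ M, ∀ g ∈ M, f * g = g * f) :
    M.Finite ∧ M.ncard ≤ 2 ^ n :=
  stmt19_general n hn M hidem hcomm

end InvSgpPaper
end
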